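/- arXiv:2409.06543 — 2 statements merged into one kernel-verified Lean document; each statement's English description precedes it below -/
import Mathlib

section
/- The number of fixed points of the linear torus map induced by A ∈ SL(2,ℤ) with tr(A) > 2 equals tr(A) − 2. -/
abbrev Torus := UnitAddCircle × UnitAddCircle

/-- The torus map induced by an integer matrix A: x ↦ A·x mod ℤ². -/
noncomputable def toralMap (A : Matrix (Fin 2) (Fin 2) ℤ) (p : Torus) : Torus :=
  (A 0 0 • p.1 + A 0 1 • p.2, A 1 0 • p.1 + A 1 1 • p.2)

/- Auxiliary real identities -/

private lemma aux1 (α β γ δ v0 v1 : ℝ) (hdet : α*δ - β*γ = 1) (hD : 2-α-δ ≠ 0) :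
    (α-1) * (((δ-1)*v0 - β*v1)/(2-α-δ)) + β * ((-γ*v0 + (α-1)*v1)/(2-α-δ)) = v0 := by
  field_simp
  linear_combination v0 * hdet

private lemma aux2 (α β γ δ v0 v1 : ℝ) (hdet : α*δ - β*γ = 1) (hD : 2-α-δ ≠ 0) :
    γ * (((δ-1)*v0 - β*v1)/(2-α-δ)) + (δ-1) * ((-γ*v0 + (α-1)*v1)/(2-α-δ)) = v1 := by
  field_simp
  linear_combination v1 * hdet

private lemma aux3 (α β γ δ x y m n : ℝ) (hdet : α*δ - β*γ = 1) (hD : 2-α-δ ≠ 0)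
    (hm : m = (α-1)*x + β*y) (hn : n = γ*x + (δ-1)*y) :
    ((δ-1)*m - β*n)/(2-α-δ) = x := by
  subst hm hn
  field_simp
  linear_combination x * hdet

private lemma aux4 (α β γ δ x y m n : ℝ) (hdet : α*δ - β*γ = 1) (hD : 2-α-δ ≠ 0)
    (hm : m = (α-1)*x + β*y) (hn : n = γ*x + (δ-1)*y) :
    (-γ*m + (α-1)*n)/(2-α-δ) = y := by
  subst hm hn
  field_simp
  linear_combination y * hdet

/- AddCircle helpers -/

private lemma circle_smul (k : ℤ) (x : ℝ) :
    k • ((x:ℝ) : UnitAddCircle) = ((k * x : ℝ) : UnitAddCircle) := by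
  rw [← QuotientAddGroup.mk_zsmul]; norm_num

private lemma circle_eq_of_int (x y : ℝ) (k : ℤ) (h : (k:ℝ) = x - y) :
    (x : UnitAddCircle) = y := by
  rw [QuotientAddGroup.eq_iff_sub_mem]
  exact AddSubgroup.mem_zmultiples_iff.mpr ⟨k, by simpa using h⟩

private lemma circle_int_exists (x y : ℝ) (h : (x : UnitAddCircle) = y) :
    ∃ k : ℤ, (k:ℝ) = x - y := by
  rw [QuotientAddGroup.eq_iff_sub_mem] at h
  obtain ⟨k, hk⟩ := AddSubgroup.mem_zmultiples_iff.mp h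
  exact ⟨k, by simpa using hk⟩

private lemma circle_zero_of_int (x : ℝ) (k : ℤ) (h : (k:ℝ) = x) :
    (x : UnitAddCircle) = 0 :=
  (AddCircle.coe_eq_zero_iff 1).mpr ⟨k, by simpa using h⟩

/- The cardinality of the cokernel of an invertible integer matrix -/

private lemma coker_card (B : Matrix (Fin 2) (Fin 2) ℤ) (hB : B.det ≠ 0) :
    (LinearMap.range (Matrix.toLin' B)).toAddSubgroup.index = B.det.natAbs := by
  classical
  set f : (Fin 2 → ℤ) →ₗ[ℤ] (Fin 2 → ℤ) := Matrix.toLin' B with hf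
  have hinj : Function.Injective f := by
    rw [← LinearMap.ker_eq_bot]
    rw [LinearMap.ker_eq_bot']
    intro u hu
    have h1 : B.adjugate.mulVec (B.mulVec u) = 0 := by
      rw [hf, Matrix.toLin'_apply] at hu; rw [hu]; simp [Matrix.mulVec_zero]
    rw [Matrix.mulVec_mulVec, Matrix.adjugate_mul, Matrix.smul_mulVec,
      Matrix.one_mulVec] at h1
    have := smul_eq_zero.mp h1
    tauto
  set N : Submodule ℤ (Fin 2 → ℤ) := LinearMap.range f with hN
  set e : (Fin 2 → ℤ) ≃ₗ[ℤ] N := LinearEquiv.ofInjective f hinj with he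
  obtain ⟨n, snf⟩ := Submodule.smithNormalForm (Pi.basisFun ℤ (Fin 2)) N
  have hn : n = 2 := by
    have h1 : Module.finrank ℤ N = n := by
      simpa using Module.finrank_eq_card_basis snf.bN
    have h2 : Module.finrank ℤ N = 2 := by
      have := Module.finrank_eq_card_basis ((Pi.basisFun ℤ (Fin 2)).map e)
      simpa using this
    omega
  subst hn
  have hfb : Function.Bijective snf.f := Finite.injective_iff_bijective.mp snf.f.injective
  set σ : Fin 2 ≃ Fin 2 := Equiv.ofBijective snf.f hfb with hσ
  set e2 : (Fin 2 → ℤ) ≃ₗ[ℤ] N := snf.bM.equiv snf.bN σ.symm with he2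
  set g : (Fin 2 → ℤ) →ₗ[ℤ] (Fin 2 → ℤ) := N.subtype ∘ₗ (e2 : (Fin 2 → ℤ) →ₗ[ℤ] N) with hg
  have hgb : ∀ i, g (snf.bM i) = snf.a (σ.symm i) • snf.bM i := by
    intro i
    rw [hg]
    simp only [LinearMap.comp_apply, he2, LinearEquiv.coe_coe, Module.Basis.equiv_apply,
      Submodule.coe_subtype]
    rw [snf.snf]
    congr 1
    exact congrArg snf.bM (σ.apply_symm_apply i)
  have hdetg : LinearMap.det g = ∏ i, snf.a i := by
    rw [← LinearMap.det_toMatrix snf.bM]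
    have : LinearMap.toMatrix snf.bM snf.bM g = Matrix.diagonal (snf.a ∘ σ.symm) := by
      ext i j
      rw [LinearMap.toMatrix_apply, hgb, map_smul, Module.Basis.repr_self]
      by_cases h : i = j
      · subst h; simp
      · simp [Matrix.diagonal_apply_ne _ h, Finsupp.single_apply, Ne.symm h, h]
    rw [this, Matrix.det_diagonal]
    exact Equiv.prod_comp σ.symm snf.a
  have hassoc : Associated (LinearMap.det f) (LinearMap.det g) := by
    have h1 : f = N.subtype ∘ₗ (e : (Fin 2 → ℤ) →ₗ[ℤ] N) := by
      refine LinearMap.ext fun v => ?_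
      rfl
    rw [h1, hg]
    exact LinearMap.associated_det_comp_equiv N.subtype e e2
  have hnatabs : (LinearMap.det f).natAbs = (∏ i, snf.a i).natAbs := by
    rw [← hdetg]; exact Int.natAbs_eq_iff_associated.mpr hassoc
  rw [snf.toAddSubgroup_index_eq_ite]
  simp only [Fintype.card_fin, if_pos rfl]
  have : ∀ i : Fin 2, (Submodule.toAddSubgroup (Ideal.span {snf.a i})).index = (snf.a i).natAbs := by
    intro i
    rw [Ideal.span_singleton_toAddSubgroup_eq_zmultiples, Int.index_zmultiples]
  simp only [if_true]
  rw [Finset.prod_congr rfl (fun i _ => this i)]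
  have hmp : ∏ i, (snf.a i).natAbs = (∏ i, snf.a i).natAbs :=
    (map_prod Int.natAbsHom snf.a Finset.univ).symm
  rw [hmp, ← hnatabs, hf, LinearMap.det_toLin']

/-- For A ∈ SL(2,ℤ) with tr(A) > 2, the number of fixed points on the torus
equals tr(A) − 2. -/
theorem card_fixed_points_eq_trace_sub_two
    (A : Matrix (Fin 2) (Fin 2) ℤ) (hdet : A.det = 1) (htr : 2 < A.trace) :
    (Nat.card {p : Torus // toralMap A p = p} : ℤ) = A.trace - 2 := by
  classical
  -- notation for the entries, as integers and reals
  set a : ℤ := A 0 0 with ha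
  set b : ℤ := A 0 1 with hb
  set c : ℤ := A 1 0 with hc
  set d : ℤ := A 1 1 with hd
  have hdet2 : a * d - b * c = 1 := by rw [Matrix.det_fin_two] at hdet; exact hdet
  have htr2 : 2 < a + d := by rwa [Matrix.trace_fin_two] at htr
  set α : ℝ := (a : ℝ) with hα
  set β : ℝ := (b : ℝ) with hβ
  set γ : ℝ := (c : ℝ) with hγ
  set δ : ℝ := (d : ℝ) with hδ
  have hdetR : α * δ - β * γ = 1 := by
    rw [hα, hβ, hγ, hδ]; exact_mod_cast hdet2
  have hDR : (2 : ℝ) - α - δ ≠ 0 := by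
    rw [hα, hδ]
    have : (2:ℝ) < (a:ℝ) + (d:ℝ) := by exact_mod_cast htr2
    linarith
  -- the matrix B = A - 1
  set B : Matrix (Fin 2) (Fin 2) ℤ := A - 1 with hB
  have hB00 : B 0 0 = a - 1 := by simp [hB, Matrix.sub_apply, Matrix.one_apply, ha]
  have hB01 : B 0 1 = b := by simp [hB, Matrix.sub_apply, Matrix.one_apply, hb]
  have hB10 : B 1 0 = c := by simp [hB, Matrix.sub_apply, Matrix.one_apply, hc]
  have hB11 : B 1 1 = d - 1 := by simp [hB, Matrix.sub_apply, Matrix.one_apply, hd]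
  have hBdet : B.det = 2 - (a + d) := by
    rw [Matrix.det_fin_two, hB00, hB01, hB10, hB11]
    linear_combination hdet2
  have hBne : B.det ≠ 0 := by rw [hBdet]; omega
  have hmv : ∀ u : Fin 2 → ℤ, B.mulVec u = ![(a-1) * u 0 + b * u 1, c * u 0 + (d-1) * u 1] := by
    intro u
    funext i
    fin_cases i <;>
      simp [Matrix.mulVec, dotProduct, Fin.sum_univ_two, hB00, hB01, hB10, hB11]
  set N : Submodule ℤ (Fin 2 → ℤ) := LinearMap.range (Matrix.toLin' B) with hN
  have hmemN : ∀ v : Fin 2 → ℤ, v ∈ N ↔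
      ∃ u : Fin 2 → ℤ, (a-1) * u 0 + b * u 1 = v 0 ∧ c * u 0 + (d-1) * u 1 = v 1 := by
    intro v
    constructor
    · rintro ⟨u, hu⟩
      rw [Matrix.toLin'_apply, hmv] at hu
      exact ⟨u, by rw [← hu]; simp, by rw [← hu]; simp⟩
    · rintro ⟨u, h0, h1⟩
      refine ⟨u, ?_⟩
      rw [Matrix.toLin'_apply, hmv]
      funext i
      fin_cases i <;> simpa
  -- the real coordinates of the candidate fixed point attached to an integer vector
  set X : (Fin 2 → ℤ) → ℝ := fun v => ((δ-1) * (v 0 : ℝ) - β * (v 1 : ℝ)) / (2-α-δ) with hX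
  set Y : (Fin 2 → ℤ) → ℝ := fun v => (-γ * (v 0 : ℝ) + (α-1) * (v 1 : ℝ)) / (2-α-δ) with hY
  have hXadd : ∀ v w, X (v + w) = X v + X w := by
    intro v w
    rw [hX]
    simp only [Pi.add_apply]
    push_cast
    field_simp
    ring
  have hYadd : ∀ v w, Y (v + w) = Y v + Y w := by
    intro v w
    rw [hY]
    simp only [Pi.add_apply]
    push_cast
    field_simp
    ring
  -- the homomorphism ψ and its lift to the quotient
  set ψ : (Fin 2 → ℤ) →+ Torus :=
    AddMonoidHom.mk' (fun v => (((X v : ℝ) : UnitAddCircle), ((Y v : ℝ) : UnitAddCircle)))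
      (by
        intro v w
        have h1 : ((X (v+w) : ℝ) : UnitAddCircle) = ((X v : ℝ) : UnitAddCircle) + ((X w : ℝ)) := by
          rw [hXadd]; rfl
        have h2 : ((Y (v+w) : ℝ) : UnitAddCircle) = ((Y v : ℝ) : UnitAddCircle) + ((Y w : ℝ)) := by
          rw [hYadd]; rfl
        simp only [h1, h2]
        rfl) with hψ
  have hψ_apply : ∀ v, ψ v = (((X v : ℝ) : UnitAddCircle), ((Y v : ℝ) : UnitAddCircle)) :=
    fun v => rfl
  have hker : ∀ v ∈ N.toAddSubgroup, ψ v = (0 : Torus) := by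
    intro v hv
    obtain ⟨u, h0, h1⟩ := (hmemN v).mp hv
    have hx : X v = (u 0 : ℝ) := by
      simp only [hX]
      exact aux3 α β γ δ (u 0) (u 1) _ _ hdetR hDR
        (by rw [← h0]; push_cast [hα, hβ]; ring) (by rw [← h1]; push_cast [hγ, hδ]; ring)
    have hy : Y v = (u 1 : ℝ) := by
      simp only [hY]
      exact aux4 α β γ δ (u 0) (u 1) _ _ hdetR hDR
        (by rw [← h0]; push_cast [hα, hβ]; ring) (by rw [← h1]; push_cast [hγ, hδ]; ring)
    rw [hψ_apply]
    have : (0 : Torus) = ((0:UnitAddCircle), (0:UnitAddCircle)) := rfl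
    rw [this]
    refine Prod.ext ?_ ?_
    · exact circle_zero_of_int _ (u 0) (by rw [hx])
    · exact circle_zero_of_int _ (u 1) (by rw [hy])
  set F : ((Fin 2 → ℤ) ⧸ N.toAddSubgroup) →+ Torus :=
    QuotientAddGroup.lift N.toAddSubgroup ψ hker with hF
  -- the image of ψ consists of fixed points
  have htoral : ∀ x y : ℝ, toralMap A (((x:ℝ):UnitAddCircle), ((y:ℝ):UnitAddCircle)) =
      (((α*x + β*y : ℝ) : UnitAddCircle), ((γ*x + δ*y : ℝ) : UnitAddCircle)) := by
    intro x y
    rw [toralMap]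
    refine Prod.ext ?_ ?_
    · show a • ((x:ℝ):UnitAddCircle) + b • ((y:ℝ):UnitAddCircle) = _
      rw [circle_smul, circle_smul]
      rfl
    · show c • ((x:ℝ):UnitAddCircle) + d • ((y:ℝ):UnitAddCircle) = _
      rw [circle_smul, circle_smul]
      rfl
  have hfix : ∀ v : Fin 2 → ℤ, toralMap A (ψ v) = ψ v := by
    intro v
    rw [hψ_apply, htoral]
    refine Prod.ext ?_ ?_
    · refine circle_eq_of_int _ _ (v 0) ?_
      have h := aux1 α β γ δ (v 0) (v 1) hdetR hDR
      simp only [hX, hY]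
      linear_combination -h
    · refine circle_eq_of_int _ _ (v 1) ?_
      have h := aux2 α β γ δ (v 0) (v 1) hdetR hDR
      simp only [hX, hY]
      linear_combination -h
  -- F is injective
  have hFinj : Function.Injective F := by
    rw [injective_iff_map_eq_zero]
    intro q hq
    induction q using QuotientAddGroup.induction_on with
    | H v =>
      have hv : ψ v = 0 := hq
      rw [hψ_apply] at hv
      have h1 : ((X v : ℝ) : UnitAddCircle) = 0 := congrArg Prod.fst hv
      have h2 : ((Y v : ℝ) : UnitAddCircle) = 0 := congrArg Prod.snd hv
      obtain ⟨m, hm⟩ := circle_int_exists _ 0 h1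
      obtain ⟨n, hn⟩ := circle_int_exists _ 0 h2
      rw [sub_zero] at hm hn
      have hveq : v ∈ N := by
        rw [hmemN]
        refine ⟨![m, n], ?_, ?_⟩
        · have key : ((α-1) * (m:ℝ) + β * (n:ℝ)) = (v 0 : ℝ) := by
            rw [hm, hn, hX, hY]
            have := aux1 α β γ δ (v 0) (v 1) hdetR hDR
            simpa using this
          have : (((a-1) * m + b * n : ℤ) : ℝ) = ((v 0 : ℤ) : ℝ) := by
            push_cast [hα, hβ] at key ⊢
            linarith [key]
          have := Int.cast_injective this
          simpa using this
        · have key : (γ * (m:ℝ) + (δ-1) * (n:ℝ)) = (v 1 : ℝ) := by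
            rw [hm, hn, hX, hY]
            have := aux2 α β γ δ (v 0) (v 1) hdetR hDR
            simpa using this
          have : ((c * m + (d-1) * n : ℤ) : ℝ) = ((v 1 : ℤ) : ℝ) := by
            push_cast [hγ, hδ] at key ⊢
            linarith [key]
          have := Int.cast_injective this
          simpa using this
      exact (QuotientAddGroup.eq_zero_iff v).mpr hveq
  -- every fixed point is in the image of F
  have hFsurj : ∀ p : Torus, toralMap A p = p → ∃ q, F q = p := by
    intro p hp
    obtain ⟨x, hx⟩ := QuotientAddGroup.mk_surjective p.1
    obtain ⟨y, hy⟩ := QuotientAddGroup.mk_surjective p.2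
    have hp' : p = (((x:ℝ):UnitAddCircle), ((y:ℝ):UnitAddCircle)) := by
      rw [Prod.ext_iff]; exact ⟨hx.symm, hy.symm⟩
    rw [hp', htoral] at hp
    have h1 : ((α*x + β*y : ℝ) : UnitAddCircle) = ((x:ℝ):UnitAddCircle) :=
      congrArg Prod.fst hp
    have h2 : ((γ*x + δ*y : ℝ) : UnitAddCircle) = ((y:ℝ):UnitAddCircle) :=
      congrArg Prod.snd hp
    obtain ⟨m, hm⟩ := circle_int_exists _ _ h1
    obtain ⟨n, hn⟩ := circle_int_exists _ _ h2
    refine ⟨QuotientAddGroup.mk ![m, n], ?_⟩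
    have hFv : F (QuotientAddGroup.mk ![m, n]) = ψ ![m, n] := rfl
    rw [hFv, hψ_apply, hp']
    have e0 : ((![m, n] : Fin 2 → ℤ) 0 : ℝ) = (m:ℝ) := by norm_num
    have e1 : ((![m, n] : Fin 2 → ℤ) 1 : ℝ) = (n:ℝ) := by norm_num
    have hxv : X ![m, n] = x := by
      simp only [hX, e0, e1]
      refine aux3 α β γ δ x y (m:ℝ) (n:ℝ) hdetR hDR ?_ ?_
      · rw [hm]; ring
      · rw [hn]; ring
    have hyv : Y ![m, n] = y := by
      simp only [hY, e0, e1]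
      refine aux4 α β γ δ x y (m:ℝ) (n:ℝ) hdetR hDR ?_ ?_
      · rw [hm]; ring
      · rw [hn]; ring
    rw [hxv, hyv]
  -- assemble the bijection
  set G : ((Fin 2 → ℤ) ⧸ N.toAddSubgroup) → {p : Torus // toralMap A p = p} :=
    fun q => ⟨F q, by
      induction q using QuotientAddGroup.induction_on with
      | H v => exact hfix v⟩ with hG
  have hGbij : Function.Bijective G := by
    constructor
    · intro q q' hqq'
      exact hFinj (congrArg Subtype.val hqq')
    · rintro ⟨p, hp⟩
      obtain ⟨q, hq⟩ := hFsurj p hp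
      exact ⟨q, Subtype.ext hq⟩
  have hcard : Nat.card {p : Torus // toralMap A p = p} =
      Nat.card ((Fin 2 → ℤ) ⧸ N.toAddSubgroup) :=
    (Nat.card_congr (Equiv.ofBijective G hGbij)).symm
  have hindex : Nat.card ((Fin 2 → ℤ) ⧸ N.toAddSubgroup) = N.toAddSubgroup.index :=
    (AddSubgroup.index_eq_card N.toAddSubgroup).symm
  have hcoker := coker_card B hBne
  rw [hcard, hindex, hN, hcoker, hBdet]
  rw [Matrix.trace_fin_two, ← ha, ← hd]
  omega
end

section
/- Every A ∈ SL(2,ℤ) with tr(A) = 3 is conjugate in SL(2,ℤ) to either the cat map [[2,1],[1,1]] or its transpose [[2,1],[1,1]]ᵀ. -/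
open Matrix

def catSL : Matrix.SpecialLinearGroup (Fin 2) ℤ :=
  ⟨!![2, 1; 1, 1], by norm_num [Matrix.det_fin_two_of]⟩

abbrev SL2' : Type := Matrix.SpecialLinearGroup (Fin 2) ℤ

def mkSL (a b c d : ℤ) (h : a*d - b*c = 1) : SL2' :=
  ⟨!![a,b;c,d], by rw [Matrix.det_fin_two_of]; linarith⟩

lemma mkSL_coe (a b c d : ℤ) (h : a*d - b*c = 1) :
    (mkSL a b c d h : Matrix (Fin 2) (Fin 2) ℤ) = !![a,b;c,d] := rfl

lemma catSL_coe : (catSL : Matrix (Fin 2) (Fin 2) ℤ) = !![2,1;1,1] := rfl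

lemma conj_of_comm (P A C : SL2') (h : P * A = C * P) : P * A * P⁻¹ = C := by
  rw [h, mul_inv_cancel_right]

lemma conj_of_comm' (P A C : SL2')
    (h : (P : Matrix (Fin 2) (Fin 2) ℤ) * A = (C : Matrix (Fin 2) (Fin 2) ℤ) * P) :
    P * A * P⁻¹ = C := by
  apply conj_of_comm
  apply Subtype.ext
  rw [Matrix.SpecialLinearGroup.coe_mul, Matrix.SpecialLinearGroup.coe_mul]
  exact h

lemma trace_conj (P A : SL2') :
    ((P * A * P⁻¹ : SL2') : Matrix (Fin 2) (Fin 2) ℤ).trace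
      = ((A : Matrix (Fin 2) (Fin 2) ℤ)).trace := by
  have h : ((P * A * P⁻¹ : SL2') : Matrix (Fin 2) (Fin 2) ℤ)
      = (P : Matrix (Fin 2) (Fin 2) ℤ) * A * (P⁻¹ : SL2') := by simp
  rw [h, Matrix.trace_mul_cycle]
  have h2 : ((P⁻¹ : SL2') : Matrix (Fin 2) (Fin 2) ℤ) * P = 1 := by
    rw [← Matrix.SpecialLinearGroup.coe_mul, inv_mul_cancel,
      Matrix.SpecialLinearGroup.coe_one]
  rw [h2, one_mul]

lemma entry00_conj (p q r s : ℤ) (h : p*s - q*r = 1) (A : SL2') :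
    ((mkSL p q r s h * A * (mkSL p q r s h)⁻¹ : SL2') : Matrix (Fin 2) (Fin 2) ℤ) 0 0
      = (p * (A : Matrix (Fin 2) (Fin 2) ℤ) 0 0 + q * (A : Matrix (Fin 2) (Fin 2) ℤ) 1 0) * s
        - (p * (A : Matrix (Fin 2) (Fin 2) ℤ) 0 1 + q * (A : Matrix (Fin 2) (Fin 2) ℤ) 1 1) * r := by
  rw [Matrix.SpecialLinearGroup.coe_mul, Matrix.SpecialLinearGroup.coe_mul, Matrix.SpecialLinearGroup.coe_inv]
  simp [Matrix.SpecialLinearGroup.coe_mul, Matrix.SpecialLinearGroup.coe_inv, mkSL,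
    Matrix.adjugate_fin_two, Matrix.mul_apply, Fin.sum_univ_succ, Matrix.vecMul,
    dotProduct]
  ring

lemma step_aux (A P : SL2') (n : ℕ)
    (IH : ∀ B : SL2', (B : Matrix (Fin 2) (Fin 2) ℤ).trace = 3 →
      (2 * (B : Matrix (Fin 2) (Fin 2) ℤ) 0 0 - 3).natAbs ≤ n →
      ∃ Q : SL2', Q * B * Q⁻¹ = catSL)
    (htr : (A : Matrix (Fin 2) (Fin 2) ℤ).trace = 3)
    (hdec : (2 * ((P * A * P⁻¹ : SL2') : Matrix (Fin 2) (Fin 2) ℤ) 0 0 - 3).natAbs ≤ n) :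
    ∃ Q : SL2', Q * A * Q⁻¹ = catSL := by
  obtain ⟨Q, hQ⟩ := IH (P * A * P⁻¹) (by rw [trace_conj]; exact htr) hdec
  exact ⟨Q * P, by rw [← hQ]; group⟩

lemma key : ∀ n : ℕ, ∀ A : SL2', (A : Matrix (Fin 2) (Fin 2) ℤ).trace = 3 →
    (2 * (A : Matrix (Fin 2) (Fin 2) ℤ) 0 0 - 3).natAbs ≤ n →
    ∃ P : SL2', P * A * P⁻¹ = catSL := by
  intro n
  induction n with
  | zero => intro A htr hm; omega
  | succ n IH =>
    intro A htr hm
    obtain ⟨a, b, c, d, ha, hb, hc, hd⟩ :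
        ∃ a b c d : ℤ, (A : Matrix (Fin 2) (Fin 2) ℤ) 0 0 = a ∧
          (A : Matrix (Fin 2) (Fin 2) ℤ) 0 1 = b ∧
          (A : Matrix (Fin 2) (Fin 2) ℤ) 1 0 = c ∧
          (A : Matrix (Fin 2) (Fin 2) ℤ) 1 1 = d := ⟨_, _, _, _, rfl, rfl, rfl, rfl⟩
    have htr' : a + d = 3 := by
      rw [Matrix.trace_fin_two, ha, hd] at htr; exact htr
    have hdet : a * d - b * c = 1 := by
      have := A.2
      rw [Matrix.det_fin_two, ha, hb, hc, hd] at this; exact this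
    have hAeq : (A : Matrix (Fin 2) (Fin 2) ℤ) = !![a,b;c,d] := by
      rw [Matrix.eta_fin_two (A : Matrix (Fin 2) (Fin 2) ℤ), ha, hb, hc, hd]
    by_cases hcase : a = 1 ∨ a = 2
    · -- base cases
      have hd3 : d = 3 - a := by omega
      have hbc : b * c = 1 := by
        rcases hcase with h | h <;> (subst h; subst hd3; norm_num at hdet; omega)
      rcases Int.mul_eq_one_iff_eq_one_or_neg_one.mp hbc with ⟨hb1, hc1⟩ | ⟨hb1, hc1⟩ <;>
        rcases hcase with ha1 | ha1
      · -- a=1,b=1,c=1,d=2 : P = T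
        refine ⟨mkSL 1 1 0 1 (by ring), conj_of_comm' _ _ _ ?_⟩
        rw [mkSL_coe, catSL_coe, hAeq, ha1, hb1, hc1, show d = 2 by omega]
        ext i j; fin_cases i <;> fin_cases j <;>
          simp [Matrix.mul_apply, Fin.sum_univ_succ]
      · -- a=2,b=1,c=1,d=1 : P = 1
        refine ⟨1, ?_⟩
        rw [inv_one, mul_one, one_mul]
        apply Subtype.ext
        rw [catSL_coe, hAeq, ha1, hb1, hc1, show d = 1 by omega]
      · -- a=1,b=-1,c=-1,d=2 : P = S
        refine ⟨mkSL 0 (-1) 1 0 (by ring), conj_of_comm' _ _ _ ?_⟩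
        rw [mkSL_coe, catSL_coe, hAeq, ha1, hb1, hc1, show d = 2 by omega]
        ext i j; fin_cases i <;> fin_cases j <;>
          simp [Matrix.mul_apply, Fin.sum_univ_succ]
      · -- a=2,b=-1,c=-1,d=1 : P = T*S
        refine ⟨mkSL 1 (-1) 1 0 (by ring), conj_of_comm' _ _ _ ?_⟩
        rw [mkSL_coe, catSL_coe, hAeq, ha1, hb1, hc1, show d = 1 by omega]
        ext i j; fin_cases i <;> fin_cases j <;>
          simp [Matrix.mul_apply, Fin.sum_univ_succ]
    · -- reduction case
      have harange : a ≤ 0 ∨ 3 ≤ a := by omega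
      have hd3 : d = 3 - a := by omega
      have had : a * d = 3 * a - a * a := by rw [hd3]; ring
      have hbcneg : b * c = 3 * a - a * a - 1 := by linarith
      have hbcle : b * c ≤ -1 := by rcases harange with h | h <;> nlinarith
      have hb0 : b ≠ 0 := by intro h; rw [h] at hbcle; simp at hbcle
      have hc0 : c ≠ 0 := by intro h; rw [h] at hbcle; simp at hbcle
      have habs : ((b*c).natAbs : ℤ) = a * a - 3 * a + 1 := by
        rw [Int.ofNat_natAbs_of_nonpos (by omega)]; omega
      by_cases hbc2 : b.natAbs ≤ c.natAbs
      · have hbb : b * b ≤ a * a - 3 * a + 1 := by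
          have h1 : (b.natAbs : ℤ) * b.natAbs ≤ (b.natAbs : ℤ) * c.natAbs := by
            have := Nat.mul_le_mul_left b.natAbs hbc2
            exact_mod_cast this
          rw [Int.natAbs_mul_self'] at h1
          rw [show (b.natAbs : ℤ) * c.natAbs = ((b*c).natAbs : ℤ) by
            rw [Int.natAbs_mul]; push_cast; ring, habs] at h1
          exact h1
        have hlt : 2 * b.natAbs < (2 * a - 3).natAbs := by
          by_contra hcon
          push_neg at hcon
          have h1 : ((2*a-3).natAbs : ℤ) ≤ 2 * b.natAbs := by exact_mod_cast hcon
          have h2 : ((2*a-3).natAbs : ℤ) * ((2*a-3).natAbs) = (2*a-3) * (2*a-3) :=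
            Int.natAbs_mul_self' _
          have h3 : (b.natAbs : ℤ) * b.natAbs = b * b := Int.natAbs_mul_self' _
          nlinarith [Int.natCast_nonneg (2*a-3).natAbs, Int.natCast_nonneg b.natAbs]
        rcases le_or_gt 0 b with hbs | hbs <;> rcases le_or_gt 0 (2*a-3) with has | has
        · -- b ≥ 0, 2a-3 ≥ 0 : a' = a - b, P = L
          apply step_aux A (mkSL 1 0 1 1 (by ring)) n IH htr
          rw [entry00_conj, ha, hb, hc, hd,
            show (1*a + 0*c)*1 - (1*b + 0*d)*1 = a - b by ring]
          omega
        · -- b ≥ 0, 2a-3 < 0 : a' = a + b, P = L'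
          apply step_aux A (mkSL 1 0 (-1) 1 (by ring)) n IH htr
          rw [entry00_conj, ha, hb, hc, hd,
            show (1*a + 0*c)*1 - (1*b + 0*d)*(-1) = a + b by ring]
          omega
        · -- b < 0, 2a-3 ≥ 0 : a' = a + b, P = L'
          apply step_aux A (mkSL 1 0 (-1) 1 (by ring)) n IH htr
          rw [entry00_conj, ha, hb, hc, hd,
            show (1*a + 0*c)*1 - (1*b + 0*d)*(-1) = a + b by ring]
          omega
        · -- b < 0, 2a-3 < 0 : a' = a - b, P = L
          apply step_aux A (mkSL 1 0 1 1 (by ring)) n IH htr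
          rw [entry00_conj, ha, hb, hc, hd,
            show (1*a + 0*c)*1 - (1*b + 0*d)*1 = a - b by ring]
          omega
      · push_neg at hbc2
        have hcc : c * c ≤ a * a - 3 * a + 1 := by
          have h1 : (c.natAbs : ℤ) * c.natAbs ≤ (c.natAbs : ℤ) * b.natAbs := by
            have := Nat.mul_le_mul_left c.natAbs (le_of_lt hbc2)
            exact_mod_cast this
          rw [Int.natAbs_mul_self'] at h1
          rw [show (c.natAbs : ℤ) * b.natAbs = ((b*c).natAbs : ℤ) by
            rw [Int.natAbs_mul]; push_cast; ring, habs] at h1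
          exact h1
        have hlt : 2 * c.natAbs < (2 * a - 3).natAbs := by
          by_contra hcon
          push_neg at hcon
          have h1 : ((2*a-3).natAbs : ℤ) ≤ 2 * c.natAbs := by exact_mod_cast hcon
          have h2 : ((2*a-3).natAbs : ℤ) * ((2*a-3).natAbs) = (2*a-3) * (2*a-3) :=
            Int.natAbs_mul_self' _
          have h3 : (c.natAbs : ℤ) * c.natAbs = c * c := Int.natAbs_mul_self' _
          nlinarith [Int.natCast_nonneg (2*a-3).natAbs, Int.natCast_nonneg c.natAbs]
        rcases le_or_gt 0 c with hcs | hcs <;> rcases le_or_gt 0 (2*a-3) with has | has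
        · -- c ≥ 0, 2a-3 ≥ 0 : a' = a - c, P = T'
          apply step_aux A (mkSL 1 (-1) 0 1 (by ring)) n IH htr
          rw [entry00_conj, ha, hb, hc, hd,
            show (1*a + (-1)*c)*1 - (1*b + (-1)*d)*0 = a - c by ring]
          omega
        · -- c ≥ 0, 2a-3 < 0 : a' = a + c, P = T
          apply step_aux A (mkSL 1 1 0 1 (by ring)) n IH htr
          rw [entry00_conj, ha, hb, hc, hd,
            show (1*a + 1*c)*1 - (1*b + 1*d)*0 = a + c by ring]
          omega
        · -- c < 0, 2a-3 ≥ 0 : a' = a + c, P = T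
          apply step_aux A (mkSL 1 1 0 1 (by ring)) n IH htr
          rw [entry00_conj, ha, hb, hc, hd,
            show (1*a + 1*c)*1 - (1*b + 1*d)*0 = a + c by ring]
          omega
        · -- c < 0, 2a-3 < 0 : a' = a - c, P = T'
          apply step_aux A (mkSL 1 (-1) 0 1 (by ring)) n IH htr
          rw [entry00_conj, ha, hb, hc, hd,
            show (1*a + (-1)*c)*1 - (1*b + (-1)*d)*0 = a - c by ring]
          omega

/-- Every A ∈ SL(2,ℤ) with trace 3 is conjugate in SL(2,ℤ) to the cat map
[[2,1],[1,1]] (its transpose coincides with itself). -/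
theorem trace_three_conjugate_to_cat
    (A : Matrix.SpecialLinearGroup (Fin 2) ℤ)
    (htr : (A : Matrix (Fin 2) (Fin 2) ℤ).trace = 3) :
    (∃ P : Matrix.SpecialLinearGroup (Fin 2) ℤ, P * A * P⁻¹ = catSL)
    ∧ (!![2, 1; 1, 1] : Matrix (Fin 2) (Fin 2) ℤ)ᵀ = !![2, 1; 1, 1] := by
  constructor
  · exact key (2 * (A : Matrix (Fin 2) (Fin 2) ℤ) 0 0 - 3).natAbs A htr le_rfl
  · ext i j
    fin_cases i <;> fin_cases j <;> simp [Matrix.transpose_apply]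
end
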